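/- For every s ∈ [0,10] \ {2,5}, the derivative C′ of C satisfies C′(s) = β₀(s) + (4/5)·(s/5 − 1)·ln( |(2·√(s²/4 − s + 5) + (3/5)·s + 2) / (4·√(s²/5 − 2s + 5) + 8·(s/5 − 1))| ) + ((s − 2)/4)·ln( |(2·√(s²/2 − 2s + 2) + s − 2) / (2·√(s²/4 − s + 5) − 4)| ). -/

import Mathlib

/-- The cost `C(s)` (under the Euclidean 2-norm) of the optimal monotone matching
candidate `γ_s` for the curves `P = ⟨(4,−2),(1,2),(1,−4)⟩`, `Q = ⟨(0,0),(5,0)⟩`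
whose parameter-space path follows the first cell's valley up to `ℓ¹`-parameter `s`. -/
noncomputable def C (s : ℝ) : ℝ :=
  2 / Real.sqrt 5 * (∫ t in (0:ℝ)..s, |t - 5|)
  + 1 / Real.sqrt 2 * (∫ t in (s + 6)..(16:ℝ), |t - 8|)
  + (∫ t in s..(s / 2 + 5), Real.sqrt (t ^ 2 - (2 * s / 5 + 8) * t + (s ^ 2 / 5 + 20)))
  + (∫ t in (s / 2 + 5)..(s + 6),
      Real.sqrt (t ^ 2 - (s + 14) * t + (s ^ 2 / 2 + 6 * s + 50)))

/-- `β₀(s) = (3/10)·√(s²/4 − s + 5) + (2/(5√5))·|s − 5| − (1/(2√2))·|s − 2|`. -/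
noncomputable def beta0 (s : ℝ) : ℝ :=
  3 / 10 * Real.sqrt (s ^ 2 / 4 - s + 5)
    + 2 / (5 * Real.sqrt 5) * |s - 5| - 1 / (2 * Real.sqrt 2) * |s - 2|

/-!
Away from `s = 2` and `s = 5` the quadratics under the two square roots are `(t - m(s))² + c(s)`
with `c(s) > 0`, so those integrals equal `F(c, b - m) - F(c, a - m)` for the primitive
`F(c, u) = (u √(u² + c) + c log (u + √(u² + c))) / 2` of `√(u² + c)`. Since `∂F/∂u = √(u² + c)`
and `∂F/∂c = log (u + √(u² + c)) / 2 + 1 / 4`, differentiating in `s` produces boundary square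
roots plus `c'(s) / 2` times the logarithm of a quotient of positive numbers; the integrals of
`|t - k|` are handled by the fundamental theorem of calculus. The boundary square roots reduce to
`|s - 5| / √5`, `|s - 2| / √2` and `√(s²/4 - s + 5)`, which add up to `β₀`.
-/open Real intervalIntegral

theorem hasDerivAt_integral_of_continuous {f a b : ℝ → ℝ} {a' b' s : ℝ} (hf : Continuous f)
    (ha : HasDerivAt a a' s) (hb : HasDerivAt b b' s) :
    HasDerivAt (fun x => ∫ t in a x..b x, f t) (b' * f (b s) - a' * f (a s)) s := by
  have hF (u : ℝ) : HasDerivAt (fun v => ∫ t in (0 : ℝ)..v, f t) (f u) u :=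
    (hf.integral_hasStrictDerivAt 0 u).hasDerivAt
  refine ((((hF (b s)).comp s hb).sub ((hF (a s)).comp s ha)).congr_deriv (by ring))
    |>.congr_of_eventuallyEq (.of_forall fun x => ?_)
  exact (integral_interval_sub_left (hf.intervalIntegrable _ _)
    (hf.intervalIntegrable _ _)).symm

noncomputable def sqrtSqAddPrimitive (c u : ℝ) : ℝ :=
  (u * √(u ^ 2 + c) + c * log (u + √(u ^ 2 + c))) / 2

theorem add_sqrt_sq_add_pos (u : ℝ) {c : ℝ} (hc : 0 < c) : 0 < u + √(u ^ 2 + c) := by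
  have : |u| < √(u ^ 2 + c) := by
    rw [← sqrt_sq_eq_abs]
    exact sqrt_lt_sqrt (sq_nonneg u) (by linarith)
  linarith [neg_abs_le u]

theorem HasDerivAt.sqrtSqAddPrimitive {c u : ℝ → ℝ} {c' u' s : ℝ} (hc : HasDerivAt c c' s)
    (hu : HasDerivAt u u' s) (hcs : 0 < c s) :
    HasDerivAt (fun x => sqrtSqAddPrimitive (c x) (u x))
      (u' * √(u s ^ 2 + c s) + c' * (Real.log (u s + √(u s ^ 2 + c s)) / 2 + 1 / 4)) s := by
  set S := √(u s ^ 2 + c s) with hSdef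
  have hS : 0 < S := sqrt_pos.2 (by positivity)
  have hSsq : S ^ 2 = u s ^ 2 + c s := sq_sqrt (by positivity)
  have huS : 0 < u s + S := add_sqrt_sq_add_pos _ hcs
  have hsqrt : HasDerivAt (fun x => √(u x ^ 2 + c x)) ((2 * u s * u' + c') / (2 * S)) s := by
    refine (((hu.pow 2).add hc).sqrt (by positivity : u s ^ 2 + c s ≠ 0)).congr_deriv ?_
    simp [S]
  refine (((hu.mul hsqrt).add (hc.mul ((hu.add hsqrt).log huS.ne'))).div_const 2).congr_deriv
    ?_
  simp only [Pi.add_apply, ← hSdef]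
  have huS' := huS.ne'
  field_simp
  -- `c = (S - u) (S + u)` collapses the `c`-derivative to `log (u + S) / 2 + 1 / 4`
  linear_combination (-4 * (2 * u' * S + 2 * u' * u s + c')) * hSsq

theorem integral_sqrt_sq_add {c : ℝ} (hc : 0 < c) (x y : ℝ) :
    ∫ t in x..y, √(t ^ 2 + c) = sqrtSqAddPrimitive c y - sqrtSqAddPrimitive c x := by
  refine integral_eq_sub_of_hasDerivAt (fun t _ => ?_)
    ((continuous_sqrt.comp (by fun_prop)).intervalIntegrable x y)
  simpa using (hasDerivAt_const t c).sqrtSqAddPrimitive (hasDerivAt_id' t) hc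

theorem hasDerivAt_integral_sqrt_sq_add {a b m c : ℝ → ℝ} {a' b' m' c' s : ℝ}
    (ha : HasDerivAt a a' s) (hb : HasDerivAt b b' s) (hm : HasDerivAt m m' s)
    (hc : HasDerivAt c c' s) (hcs : 0 < c s) :
    HasDerivAt (fun x => ∫ t in a x..b x, √((t - m x) ^ 2 + c x))
      ((b' - m') * √((b s - m s) ^ 2 + c s) - (a' - m') * √((a s - m s) ^ 2 + c s)
        + c' / 2 * log ((b s - m s + √((b s - m s) ^ 2 + c s))
            / (a s - m s + √((a s - m s) ^ 2 + c s)))) s := by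
  have hB := hc.sqrtSqAddPrimitive (hb.sub hm) hcs
  have hA := hc.sqrtSqAddPrimitive (ha.sub hm) hcs
  refine ((hB.sub hA).congr_deriv ?_).congr_of_eventuallyEq ?_
  · simp only [Pi.sub_apply]
    rw [log_div (add_sqrt_sq_add_pos _ hcs).ne' (add_sqrt_sq_add_pos _ hcs).ne']
    ring
  · filter_upwards [hc.continuousAt.eventually (lt_mem_nhds hcs)] with x hx
    exact (integral_comp_sub_right (fun t => √(t ^ 2 + c x)) (m x)).trans
      (integral_sqrt_sq_add hx _ _)

theorem hasDerivAt_C_lower_sqrt_integral {s : ℝ} (hs5 : s ≠ 5) :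
    HasDerivAt (fun x => ∫ t in x..(x / 2 + 5),
        √(t ^ 2 - (2 * x / 5 + 8) * t + (x ^ 2 / 5 + 20)))
      (3 / 10 * √(s ^ 2 / 4 - s + 5) - 8 / 5 * √(s ^ 2 / 5 - 2 * s + 5)
        + 4 / 5 * (s / 5 - 1) * log ((2 * √(s ^ 2 / 4 - s + 5) + 3 / 5 * s + 2)
            / (4 * √(s ^ 2 / 5 - 2 * s + 5) + 8 * (s / 5 - 1)))) s := by
  have hc : 0 < 4 * (s / 5 - 1) ^ 2 := by
    have : s / 5 - 1 ≠ 0 := fun h => hs5 (by linarith)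
    positivity
  have key := hasDerivAt_integral_sqrt_sq_add (hasDerivAt_id' s)
    (((hasDerivAt_id' s).div_const 2).add_const 5) (((hasDerivAt_id' s).div_const 5).add_const 4)
    (((((hasDerivAt_id' s).div_const 5).sub_const 1).fun_pow 2).const_mul 4) hc
  have hB : √((s / 2 + 5 - (s / 5 + 4)) ^ 2 + 4 * (s / 5 - 1) ^ 2) = √(s ^ 2 / 4 - s + 5) := by
    ring_nf
  have hA : √((s - (s / 5 + 4)) ^ 2 + 4 * (s / 5 - 1) ^ 2) = 2 * √(s ^ 2 / 5 - 2 * s + 5) := by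
    rw [show (s - (s / 5 + 4)) ^ 2 + 4 * (s / 5 - 1) ^ 2
        = 2 ^ 2 * (s ^ 2 / 5 - 2 * s + 5) by ring, sqrt_mul (sq_nonneg 2), sqrt_sq zero_le_two]
  have hq : (2 * √(s ^ 2 / 4 - s + 5) + 3 / 5 * s + 2)
        / (4 * √(s ^ 2 / 5 - 2 * s + 5) + 8 * (s / 5 - 1))
      = (s / 2 + 5 - (s / 5 + 4) + √(s ^ 2 / 4 - s + 5))
        / (s - (s / 5 + 4) + 2 * √(s ^ 2 / 5 - 2 * s + 5)) := by
    rw [← mul_div_mul_left _ (s - (s / 5 + 4) + 2 * √(s ^ 2 / 5 - 2 * s + 5))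
      (two_ne_zero' ℝ)]
    congr 1 <;> ring
  refine (key.congr_of_eventuallyEq (.of_forall fun x => integral_congr fun t _ => ?_))
    |>.congr_deriv ?_
  · ring_nf
  · rw [hB, hA, hq]
    simp only [Nat.cast_ofNat, Nat.reduceSub, pow_one]
    ring

theorem hasDerivAt_C_upper_sqrt_integral {s : ℝ} (hs2 : s ≠ 2) :
    HasDerivAt (fun x => ∫ t in (x / 2 + 5)..(x + 6),
        √(t ^ 2 - (x + 14) * t + (x ^ 2 / 2 + 6 * x + 50)))
      (1 / 2 * √(s ^ 2 / 2 - 2 * s + 2)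
        + (s - 2) / 4 * log ((2 * √(s ^ 2 / 2 - 2 * s + 2) + s - 2)
            / (2 * √(s ^ 2 / 4 - s + 5) - 4))) s := by
  have hc : 0 < (s - 2) ^ 2 / 4 := by
    have : s - 2 ≠ 0 := sub_ne_zero.2 hs2
    positivity
  have key := hasDerivAt_integral_sqrt_sq_add (((hasDerivAt_id' s).div_const 2).add_const 5)
    ((hasDerivAt_id' s).add_const 6) (((hasDerivAt_id' s).div_const 2).add_const 7)
    ((((hasDerivAt_id' s).sub_const 2).fun_pow 2).div_const 4) hc
  have hB : √((s + 6 - (s / 2 + 7)) ^ 2 + (s - 2) ^ 2 / 4) = √(s ^ 2 / 2 - 2 * s + 2) := by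
    ring_nf
  have hA : √((s / 2 + 5 - (s / 2 + 7)) ^ 2 + (s - 2) ^ 2 / 4) = √(s ^ 2 / 4 - s + 5) := by
    ring_nf
  have hq : (2 * √(s ^ 2 / 2 - 2 * s + 2) + s - 2) / (2 * √(s ^ 2 / 4 - s + 5) - 4)
      = (s + 6 - (s / 2 + 7) + √(s ^ 2 / 2 - 2 * s + 2))
        / (s / 2 + 5 - (s / 2 + 7) + √(s ^ 2 / 4 - s + 5)) := by
    rw [← mul_div_mul_left _ (s / 2 + 5 - (s / 2 + 7) + √(s ^ 2 / 4 - s + 5))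
      (two_ne_zero' ℝ)]
    congr 1 <;> ring
  refine (key.congr_of_eventuallyEq (.of_forall fun x => integral_congr fun t _ => ?_))
    |>.congr_deriv ?_
  · ring_nf
  · rw [hB, hA, hq]
    simp only [Nat.cast_ofNat, Nat.reduceSub, pow_one]
    ring

theorem hasDerivAt_C {s : ℝ} (hs2 : s ≠ 2) (hs5 : s ≠ 5) :
    HasDerivAt C
      (beta0 s
        + 4 / 5 * (s / 5 - 1) * log ((2 * √(s ^ 2 / 4 - s + 5) + 3 / 5 * s + 2)
            / (4 * √(s ^ 2 / 5 - 2 * s + 5) + 8 * (s / 5 - 1)))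
        + (s - 2) / 4 * log ((2 * √(s ^ 2 / 2 - 2 * s + 2) + s - 2)
            / (2 * √(s ^ 2 / 4 - s + 5) - 4))) s := by
  have h₁ := hasDerivAt_integral_of_continuous (f := fun t => |t - 5|) (by fun_prop)
    (hasDerivAt_const s 0) (hasDerivAt_id' s)
  have h₂ := hasDerivAt_integral_of_continuous (f := fun t => |t - 8|) (by fun_prop)
    ((hasDerivAt_id' s).add_const 6) (hasDerivAt_const s 16)
  refine ((((h₁.const_mul (2 / √5)).add (h₂.const_mul (1 / √2))).add
    (hasDerivAt_C_lower_sqrt_integral hs5)).add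
    (hasDerivAt_C_upper_sqrt_integral hs2)).congr_deriv ?_
  have h5 : √(s ^ 2 / 5 - 2 * s + 5) = |s - 5| / √5 := by
    rw [show s ^ 2 / 5 - 2 * s + 5 = (s - 5) ^ 2 / 5 by ring, sqrt_div (sq_nonneg _),
      sqrt_sq_eq_abs]
  have h2 : √(s ^ 2 / 2 - 2 * s + 2) = |s - 2| / √2 := by
    rw [show s ^ 2 / 2 - 2 * s + 2 = (s - 2) ^ 2 / 2 by ring, sqrt_div (sq_nonneg _),
      sqrt_sq_eq_abs]
  rw [beta0, h5, h2, show s + 6 - 8 = s - 2 by ring]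
  field_simp
  ring

/-- For every `s ∈ [0,10] \ {2,5}` the derivative of `C` equals
`β₀(s)` plus the stated linear combination of logarithms. -/
theorem derivWithin_C_log_form (s : ℝ) (hs : s ∈ Set.Icc (0 : ℝ) 10)
    (hs2 : s ≠ 2) (hs5 : s ≠ 5) :
    derivWithin C (Set.Icc (0 : ℝ) 10) s
      = beta0 s
        + 4 / 5 * (s / 5 - 1) *
            Real.log |(2 * Real.sqrt (s ^ 2 / 4 - s + 5) + 3 / 5 * s + 2)
              / (4 * Real.sqrt (s ^ 2 / 5 - 2 * s + 5) + 8 * (s / 5 - 1))|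
        + (s - 2) / 4 *
            Real.log |(2 * Real.sqrt (s ^ 2 / 2 - 2 * s + 2) + s - 2)
              / (2 * Real.sqrt (s ^ 2 / 4 - s + 5) - 4)| := by
  rw [(hasDerivAt_C hs2 hs5).hasDerivWithinAt.derivWithin
    (uniqueDiffOn_Icc (by norm_num) s hs), log_abs, log_abs]
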